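/- The kernel of the ring homomorphism φ_3 : C[q_{g1 g2 g3} : g_i ∈ Z2] → C[a_g^{(i)} : g∈Z2, 1≤i≤4] sending q_{g1 g2 g3} ↦ a_{g1}^{(1)} a_{g2}^{(2)} a_{g3}^{(3)} a_{g1+g2+g3}^{(4)} is the ideal generated by the three binomials q_{000}q_{111} − q_{100}q_{011}, q_{001}q_{110} − q_{100}q_{011}, and q_{010}q_{101} − q_{100}q_{011}. -/

import Mathlib

/-!
`φ₃` sends each monomial `x^u` to a monomial whose exponent `A u` is additive in `u`, so its
kernel is spanned by the binomials `x^u - x^v` with `A u = A v`. Each generator is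
`q_a q_(a+1) - q₁₀₀ q₀₁₁`, and complementary labellings `a`, `a + 1` have the same image exponent.
Reducing with the generators (leading terms `q₀₀₀q₁₁₁`, `q₀₀₁q₁₁₀`, `q₀₁₀q₁₀₁`) brings every
monomial to a standard one, and the five linear equations in `A u = A v` force two standard
exponents in the same fibre to coincide.
-/

open MvPolynomial

/-- The Fourier parametrization map `φ_n` for the claw tree with `n` leaves and the group `ℤ/2`:
`q_{g_1 … g_n} ↦ a_{g_1}^{(1)} ⋯ a_{g_n}^{(n)} a_{g_1+⋯+g_n}^{(n+1)}`, where the variable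
`a_g^{(i)}` is indexed by the pair `(g, i)`. -/
noncomputable def phi (n : ℕ) :
    MvPolynomial (Fin n → ZMod 2) ℂ →ₐ[ℂ] MvPolynomial (ZMod 2 × Fin (n + 1)) ℂ :=
  aeval fun σ => (∏ i : Fin n, X (σ i, Fin.castSucc i)) * X (∑ i, σ i, Fin.last n)

theorem Finsupp.exists_eq_add_single_add_single {σ : Type*} {u : σ →₀ ℕ} {a b : σ} (hab : a ≠ b)
    (ha : u a ≠ 0) (hb : u b ≠ 0) : ∃ m, u = m + Finsupp.single a 1 + Finsupp.single b 1 := by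
  classical
  have hle : Finsupp.single a 1 + Finsupp.single b 1 ≤ u := fun x => by
    simp only [Finsupp.add_apply, Finsupp.single_apply]
    split_ifs with hax hbx
    · exact absurd (hax.trans hbx.symm) hab
    all_goals subst_vars; omega
  obtain ⟨m, rfl⟩ := exists_add_of_le hle
  exact ⟨m, by abel⟩

theorem Fintype.univ_fin_three_zmod_two :
    (Finset.univ : Finset (Fin 3 → ZMod 2)) = {![0,0,0], ![0,0,1], ![0,1,0], ![0,1,1],
      ![1,0,0], ![1,0,1], ![1,1,0], ![1,1,1]} := by
  decide

theorem Fintype.sum_fin_three_zmod_two {M : Type*} [AddCommMonoid M] (f : (Fin 3 → ZMod 2) → M) :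
    ∑ σ, f σ = f ![0,0,0] + f ![0,0,1] + f ![0,1,0] + f ![0,1,1] +
      f ![1,0,0] + f ![1,0,1] + f ![1,1,0] + f ![1,1,1] := by
  simp +decide [univ_fin_three_zmod_two, add_assoc]

section MonomialMap

variable {R σ τ : Type*} [CommRing R]

theorem aeval_monomial_one_monomial (w : σ → τ →₀ ℕ) (u : σ →₀ ℕ) (c : R) :
    aeval (fun i => monomial (w i) (1 : R)) (monomial u c) =
      monomial (Finsupp.linearCombination ℕ w u) c := by
  rw [aeval_monomial, Finsupp.linearCombination_apply, monomial_finsupp_sum_index,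
    algebraMap_eq]
  simp only [monomial_pow, one_pow]

theorem monomial_sub_monomial_mem_of_mul_X_sub_mem {I : Ideal (MvPolynomial σ R)} {a b c d : σ}
    (h : X a * X b - X c * X d ∈ I) (u : σ →₀ ℕ) :
    monomial (u + Finsupp.single a 1 + Finsupp.single b 1) (1 : R) -
      monomial (u + Finsupp.single c 1 + Finsupp.single d 1) 1 ∈ I := by
  have : monomial (u + Finsupp.single a 1 + Finsupp.single b 1) (1 : R) -
      monomial (u + Finsupp.single c 1 + Finsupp.single d 1) 1 =
      monomial u 1 * (X a * X b - X c * X d) := by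
    simp only [X, monomial_mul, mul_sub, mul_one, add_assoc]
  exact this ▸ I.mul_mem_left _ h

theorem mem_of_aeval_monomial_one_eq_zero (w : σ → τ →₀ ℕ) {I : Ideal (MvPolynomial σ R)}
    (hI : ∀ u v, Finsupp.linearCombination ℕ w u = Finsupp.linearCombination ℕ w v →
      monomial u (1 : R) - monomial v 1 ∈ I)
    {p : MvPolynomial σ R} (hp : aeval (fun i => monomial (w i) (1 : R)) p = 0) : p ∈ I := by
  set A := Finsupp.linearCombination ℕ w
  set φ := aeval (R := R) fun i => monomial (w i) (1 : R)
  -- `s` sends `x^b` to `x^u` for a chosen `u` with `A u = b`, and `q ≡ s (φ q)` modulo `I`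
  let s : MvPolynomial τ R →ₗ[R] MvPolynomial σ R :=
    (basisMonomials τ R).constr R fun b => monomial (Function.invFun A b) 1
  suffices ∀ q, q - s (φ q) ∈ I by simpa [hp] using this p
  intro q
  induction q using MvPolynomial.induction_on' with
  | monomial u c =>
    have hA : A (Function.invFun A (A u)) = A u := Function.invFun_eq ⟨u, rfl⟩
    have hs : s (monomial (A u) 1) = monomial (Function.invFun A (A u)) 1 := by
      simpa only [coe_basisMonomials] using (basisMonomials τ R).constr_basis R _ (A u)
    rw [aeval_monomial_one_monomial, ← mul_one c, ← smul_eq_mul, ← smul_monomial,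
      ← smul_monomial, map_smul, hs, ← smul_sub]
    exact I.smul_of_tower_mem c (hI _ _ hA.symm)
  | add p q hp hq =>
    simpa only [map_add, add_sub_add_comm] using I.add_mem hp hq

end MonomialMap

section Claw

variable {n : ℕ}

noncomputable def clawExponent (σ : Fin n → ZMod 2) : ZMod 2 × Fin (n + 1) →₀ ℕ :=
  ∑ i, Finsupp.single (σ i, i.castSucc) 1 + Finsupp.single (∑ i, σ i, Fin.last n) 1

theorem phi_eq_aeval (n : ℕ) :
    phi n = aeval fun σ : Fin n → ZMod 2 => monomial (clawExponent σ) (1 : ℂ) := by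
  simp only [phi, clawExponent, X, ← monomial_sum_one, monomial_mul, mul_one]

theorem linearCombination_clawExponent_castSucc (u : (Fin n → ZMod 2) →₀ ℕ) (g : ZMod 2)
    (i : Fin n) :
    Finsupp.linearCombination ℕ clawExponent u (g, i.castSucc) = ∑ σ with σ i = g, u σ := by
  rw [Finsupp.linearCombination_apply, Finsupp.sum_fintype _ _ (by simp), Finset.sum_apply',
    Finset.sum_filter]
  refine Finset.sum_congr rfl fun σ _ => ?_
  simp [clawExponent, Finsupp.single_apply, Fin.castSucc_ne_last, and_comm (b := _ = i), ite_and]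

theorem linearCombination_clawExponent_last (u : (Fin n → ZMod 2) →₀ ℕ) (g : ZMod 2) :
    Finsupp.linearCombination ℕ clawExponent u (g, Fin.last n) = ∑ σ with ∑ i, σ i = g, u σ := by
  rw [Finsupp.linearCombination_apply, Finsupp.sum_fintype _ _ (by simp), Finset.sum_apply',
    Finset.sum_filter]
  refine Finset.sum_congr rfl fun σ _ => ?_
  simp [clawExponent, Finsupp.single_apply, Fin.castSucc_ne_last]

theorem Finsupp.single_add_single_add_one {α : Type*} (g : ZMod 2) (x : α) :
    Finsupp.single (g, x) 1 + Finsupp.single (g + 1, x) 1 =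
      Finsupp.single (0, x) 1 + Finsupp.single (1, x) 1 := by
  obtain rfl | rfl : g = 0 ∨ g = 1 := by decide +revert
  · rw [zero_add]
  · rw [add_comm, show (1 + 1 : ZMod 2) = 0 by decide]

theorem clawExponent_add_clawExponent_add_one (hn : Odd n) (σ τ : Fin n → ZMod 2) :
    clawExponent σ + clawExponent (σ + 1) = clawExponent τ + clawExponent (τ + 1) := by
  suffices ∀ σ : Fin n → ZMod 2, clawExponent σ + clawExponent (σ + 1) =
      ∑ i : Fin n,
          (Finsupp.single ((0 : ZMod 2), i.castSucc) 1 + Finsupp.single (1, i.castSucc) 1) +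
        (Finsupp.single (0, Fin.last n) 1 + Finsupp.single (1, Fin.last n) 1) by
    rw [this, this]
  intro σ
  have hsum : ∑ i, (σ + 1) i = ∑ i, σ i + 1 := by
    simp [Finset.sum_add_distrib, ZMod.natCast_eq_one_iff_odd.mpr hn]
  rw [clawExponent, clawExponent, hsum, add_add_add_comm, ← Finset.sum_add_distrib,
    Finsupp.single_add_single_add_one]
  simp only [Pi.add_apply, Pi.one_apply, Finsupp.single_add_single_add_one]

theorem X_mul_X_sub_X_mul_X_mem_ker_phi (hn : Odd n) {a b c d : Fin n → ZMod 2}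
    (hb : b = a + 1) (hd : d = c + 1) : X a * X b - X c * X d ∈ RingHom.ker (phi n).toRingHom := by
  rw [RingHom.mem_ker, AlgHom.toRingHom_eq_coe, RingHom.coe_coe, phi_eq_aeval, hb, hd]
  simp only [map_sub, map_mul, aeval_X, monomial_mul, mul_one,
    clawExponent_add_clawExponent_add_one hn a c, sub_self]

end Claw

section ClawThree

variable {R : Type*} [CommRing R]

local notation "A" => Finsupp.linearCombination ℕ (clawExponent (n := 3))

theorem sums_eq_of_linearCombination_clawExponent_eq {u v : (Fin 3 → ZMod 2) →₀ ℕ}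
    (h : A u = A v) :
    u ![0,0,0] + u ![0,0,1] + u ![0,1,0] + u ![0,1,1] =
        v ![0,0,0] + v ![0,0,1] + v ![0,1,0] + v ![0,1,1] ∧
      u ![1,0,0] + u ![1,0,1] + u ![1,1,0] + u ![1,1,1] =
        v ![1,0,0] + v ![1,0,1] + v ![1,1,0] + v ![1,1,1] ∧
      u ![0,1,0] + u ![0,1,1] + u ![1,1,0] + u ![1,1,1] =
        v ![0,1,0] + v ![0,1,1] + v ![1,1,0] + v ![1,1,1] ∧
      u ![0,0,1] + u ![0,1,1] + u ![1,0,1] + u ![1,1,1] =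
        v ![0,0,1] + v ![0,1,1] + v ![1,0,1] + v ![1,1,1] ∧
      u ![0,0,1] + u ![0,1,0] + u ![1,0,0] + u ![1,1,1] =
        v ![0,0,1] + v ![0,1,0] + v ![1,0,0] + v ![1,1,1] := by
  have leaf (g : ZMod 2) (i : Fin 3) := congrArg (· (g, i.castSucc)) h
  have root := congrArg (· (1, Fin.last 3)) h
  simp only [linearCombination_clawExponent_castSucc, linearCombination_clawExponent_last,
    Finset.sum_filter, Fintype.sum_fin_three_zmod_two] at leaf root
  exact ⟨by simpa +decide using leaf 0 0, by simpa +decide using leaf 1 0,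
    by simpa +decide using leaf 1 1, by simpa +decide using leaf 1 2, by simpa +decide using root⟩

noncomputable def quadricIdeal (R : Type*) [CommRing R] :
    Ideal (MvPolynomial (Fin 3 → ZMod 2) R) :=
  Ideal.span
    {X (![0,0,0] : Fin 3 → ZMod 2) * X ![1,1,1] - X ![1,0,0] * X ![0,1,1],
     X (![0,0,1] : Fin 3 → ZMod 2) * X ![1,1,0] - X ![1,0,0] * X ![0,1,1],
     X (![0,1,0] : Fin 3 → ZMod 2) * X ![1,0,1] - X ![1,0,0] * X ![0,1,1]}

theorem X_mul_X_add_one_sub_mem_quadricIdeal {a : Fin 3 → ZMod 2}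
    (ha : a ∈ ({![0,0,0], ![0,0,1], ![0,1,0]} : Finset (Fin 3 → ZMod 2))) :
    X a * X (a + 1) - X ![1,0,0] * X ![0,1,1] ∈ quadricIdeal R := by
  simp only [Finset.mem_insert, Finset.mem_singleton] at ha
  apply Ideal.subset_span
  rcases ha with rfl | rfl | rfl <;>
    simp +decide [Matrix.cons_add, Matrix.vecHead, Matrix.vecTail, CharTwo.add_self_eq_zero]

/-- `x^u` is divisible by none of the leading terms `q₀₀₀q₁₁₁`, `q₀₀₁q₁₁₀`, `q₀₁₀q₁₀₁`. -/
def IsStandard (u : (Fin 3 → ZMod 2) →₀ ℕ) : Prop :=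
  (u ![0,0,0] = 0 ∨ u ![1,1,1] = 0) ∧ (u ![0,0,1] = 0 ∨ u ![1,1,0] = 0) ∧
    (u ![0,1,0] = 0 ∨ u ![1,0,1] = 0)

theorem IsStandard.eq {u v : (Fin 3 → ZMod 2) →₀ ℕ} (hu : IsStandard u) (hv : IsStandard v)
    (h : A u = A v) : u = v := by
  obtain ⟨h₁, h₂, h₃, h₄, h₅⟩ := sums_eq_of_linearCombination_clawExponent_eq h
  obtain ⟨hu₁, hu₂, hu₃⟩ := hu
  obtain ⟨hv₁, hv₂, hv₃⟩ := hv
  ext σ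
  have hσ : σ ∈ Finset.univ := Finset.mem_univ σ
  simp only [Fintype.univ_fin_three_zmod_two, Finset.mem_insert, Finset.mem_singleton] at hσ
  rcases hσ with rfl | rfl | rfl | rfl | rfl | rfl | rfl | rfl <;> omega

theorem exists_isStandard (u : (Fin 3 → ZMod 2) →₀ ℕ) :
    ∃ v, IsStandard v ∧ A v = A u ∧ monomial u (1 : R) - monomial v 1 ∈ quadricIdeal R := by
  induction hN : u ![0,0,0] + u ![0,0,1] + u ![0,1,0] using Nat.strong_induction_on
    generalizing u with
  | _ N ih =>
  by_cases hu : IsStandard u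
  · exact ⟨u, hu, rfl, by simp⟩
  obtain ⟨a, ha, hua, hub⟩ : ∃ a ∈ ({![0,0,0], ![0,0,1], ![0,1,0]} : Finset (Fin 3 → ZMod 2)),
      u a ≠ 0 ∧ u (a + 1) ≠ 0 := by
    simp only [IsStandard, not_and_or, not_or] at hu
    simpa +decide [Matrix.cons_add, Matrix.vecHead, Matrix.vecTail, CharTwo.add_self_eq_zero]
      using hu
  obtain ⟨m, rfl⟩ := Finsupp.exists_eq_add_single_add_single (succ_ne_self a).symm hua hub
  set u' := m + Finsupp.single ![1,0,0] 1 + Finsupp.single ![0,1,1] 1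
  -- trading `q_a q_(a+1)` for `q₁₀₀ q₀₁₁` lowers the exponent of `q_a` and no other of the three
  have hlt : u' ![0,0,0] + u' ![0,0,1] + u' ![0,1,0] < N := by
    subst hN
    simp only [Finset.mem_insert, Finset.mem_singleton] at ha
    rcases ha with rfl | rfl | rfl <;> simp +decide [u']
  obtain ⟨v, hv, hAv, hmem⟩ := ih _ hlt u' rfl
  refine ⟨v, hv, hAv.trans ?_, ?_⟩
  · simp only [u', map_add, Finsupp.linearCombination_single, one_smul, add_assoc]
    rw [clawExponent_add_clawExponent_add_one (by decide) a ![1,0,0],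
      show (![0,1,1] : Fin 3 → ZMod 2) = ![1,0,0] + 1 by decide]
  · rw [← sub_add_sub_cancel _ (monomial u' 1)]
    exact add_mem (monomial_sub_monomial_mem_of_mul_X_sub_mem
      (X_mul_X_add_one_sub_mem_quadricIdeal ha) m) hmem

theorem monomial_sub_monomial_mem_quadricIdeal {u v : (Fin 3 → ZMod 2) →₀ ℕ} (h : A u = A v) :
    monomial u (1 : R) - monomial v 1 ∈ quadricIdeal R := by
  obtain ⟨u', hu', hAu, hmu⟩ := exists_isStandard (R := R) u
  obtain ⟨v', hv', hAv, hmv⟩ := exists_isStandard (R := R) v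
  obtain rfl : u' = v' := hu'.eq hv' (by rw [hAu, hAv, h])
  simpa using sub_mem hmu hmv

end ClawThree

/-- The kernel of `φ₃` is generated by the three binomials
`q₀₀₀q₁₁₁ − q₁₀₀q₀₁₁`, `q₀₀₁q₁₁₀ − q₁₀₀q₀₁₁`, `q₀₁₀q₁₀₁ − q₁₀₀q₀₁₁`. -/
theorem stmt_8 :
    RingHom.ker (phi 3).toRingHom =
      Ideal.span
        {X (![0,0,0] : Fin 3 → ZMod 2) * X ![1,1,1] - X ![1,0,0] * X ![0,1,1],
         X (![0,0,1] : Fin 3 → ZMod 2) * X ![1,1,0] - X ![1,0,0] * X ![0,1,1],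
         X (![0,1,0] : Fin 3 → ZMod 2) * X ![1,0,1] - X ![1,0,0] * X ![0,1,1]} := by
  refine le_antisymm (fun p hp => ?_) (Ideal.span_le.mpr ?_)
  · rw [RingHom.mem_ker, AlgHom.toRingHom_eq_coe, RingHom.coe_coe, phi_eq_aeval] at hp
    exact mem_of_aeval_monomial_one_eq_zero _ (fun _ _ => monomial_sub_monomial_mem_quadricIdeal) hp
  · rintro _ (rfl | rfl | rfl) <;>
      exact X_mul_X_sub_X_mul_X_mem_ker_phi (by decide) (by decide) (by decide)
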